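/- arXiv:2010.08633 — 4 statements merged into one kernel-verified Lean document; each statement's English description precedes it below -/
import Mathlib

section
/- For every function f : {−1,1}^n → {−1,1}, every coordinate i ∈ [n], and every δ ∈ (0,1), NS_δ(f) = (1/2)·NS_δ(f_{x_i=−1}) + (1/2)·NS_δ(f_{x_i=1}) + (δ/(2(1−δ)))·Inf_i^{(δ)}(f). -/
open Finset

/-! Boolean cube `{-1,1}^n` encoded as `Fin n → Bool` (`false` ↦ -1, `true` ↦ 1). -/

/-- Expectation of `F` under the uniform distribution on `{-1,1}^n`. -/
noncomputable def expect {n : ℕ} (F : (Fin n → Bool) → ℝ) : ℝ :=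
  (∑ x : Fin n → Bool, F x) / (2 : ℝ) ^ n

/-- `f` is `{-1,1}`-valued. -/
def isPM {n : ℕ} (f : (Fin n → Bool) → ℝ) : Prop := ∀ x, f x = 1 ∨ f x = -1

/-- Joint probability mass of the pair `(x, x̃)` where `x` is uniform on `{-1,1}^n` and
`x̃ ∼_δ x` is a `δ`-noisy copy of `x` (each coordinate rerandomized independently with
probability `δ`, i.e. flipped with probability `δ/2`). -/
noncomputable def noiseWeight {n : ℕ} (δ : ℝ) (x y : Fin n → Bool) : ℝ :=
  ∏ i : Fin n, (1 / 2) * (if x i = y i then 1 - δ / 2 else δ / 2)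

/-- Noise sensitivity `NS_δ(f) = Pr[f(x) ≠ f(x̃)]` for `x` uniform, `x̃ ∼_δ x`. -/
noncomputable def NS {n : ℕ} (δ : ℝ) (f : (Fin n → Bool) → ℝ) : ℝ :=
  ∑ x : Fin n → Bool, ∑ y : Fin n → Bool,
    noiseWeight δ x y * (if f x = f y then 0 else 1)

/-- The `δ`-smoothed version `f_δ(x) = E_{x̃ ∼_δ x}[f(x̃)]`. -/
noncomputable def smooth {n : ℕ} (δ : ℝ) (f : (Fin n → Bool) → ℝ) (x : Fin n → Bool) : ℝ :=
  ∑ y : Fin n → Bool, (∏ i : Fin n, if x i = y i then 1 - δ / 2 else δ / 2) * f y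

/-- The `±1` value of a Boolean coordinate. -/
def chiB (b : Bool) : ℝ := if b then 1 else -1

/-- Fourier coefficient `f̂(S) = E[f(x) ∏_{i ∈ S} x_i]`. -/
noncomputable def fcoef {n : ℕ} (f : (Fin n → Bool) → ℝ) (S : Finset (Fin n)) : ℝ :=
  expect (fun x => f x * ∏ i ∈ S, chiB (x i))

/-- `δ`-noisy influence `Inf_i^{(δ)}(f) = ∑_{S ∋ i} (1-δ)^{|S|} f̂(S)²`. -/
noncomputable def noisyInf {n : ℕ} (δ : ℝ) (i : Fin n) (f : (Fin n → Bool) → ℝ) : ℝ :=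
  ∑ S : Finset (Fin n), if i ∈ S then (1 - δ) ^ S.card * (fcoef f S) ^ 2 else 0

/-- `δ`-noisy `d`-wise influence `Inf_i^{(δ,d)}(f) = ∑_{S ∋ i, |S| ≤ d} (1-δ)^{|S|} f̂(S)²`. -/
noncomputable def noisyInfD {n : ℕ} (δ d : ℝ) (i : Fin n) (f : (Fin n → Bool) → ℝ) : ℝ :=
  ∑ S : Finset (Fin n),
    if i ∈ S ∧ (S.card : ℝ) ≤ d then (1 - δ) ^ S.card * (fcoef f S) ^ 2 else 0

/-- Degree-`d` truncation of the `δ`-smoothed version of `f`: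
`f_δ^{≤d}(x) = ∑_{|S| ≤ d} (1-δ)^{|S|} f̂(S) ∏_{i ∈ S} x_i`. -/
noncomputable def truncSmooth {n : ℕ} (δ d : ℝ) (f : (Fin n → Bool) → ℝ)
    (x : Fin n → Bool) : ℝ :=
  ∑ S : Finset (Fin n),
    if (S.card : ℝ) ≤ d then (1 - δ) ^ S.card * fcoef f S * ∏ i ∈ S, chiB (x i) else 0

/-- The `i`-th discrete derivative `(D_i f)(x) = (f(x^{i=1}) - f(x^{i=-1})) / 2`. -/
noncomputable def Dderiv {n : ℕ} (f : (Fin n → Bool) → ℝ) (i : Fin n) (x : Fin n → Bool) : ℝ :=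
  (f (Function.update x i true) - f (Function.update x i false)) / 2

/-- The restriction (subfunction) `f_{x_i = b}`, viewed as a function on the full cube
(it does not depend on coordinate `i`). -/
def restr {n : ℕ} (f : (Fin n → Bool) → ℝ) (i : Fin n) (b : Bool) : (Fin n → Bool) → ℝ :=
  fun x => f (Function.update x i b)

/-- Variance under the uniform distribution. -/
noncomputable def varE {n : ℕ} (g : (Fin n → Bool) → ℝ) : ℝ :=
  expect (fun x => g x ^ 2) - (expect g) ^ 2

/-- `dist(f,g) = Pr[f(x) ≠ g(x)]` for `x` uniform. -/
noncomputable def distf {n : ℕ} (f g : (Fin n → Bool) → ℝ) : ℝ :=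
  expect (fun x => if f x = g x then 0 else 1)

/-- Decision trees over `{-1,1}^n` with `±1`-labeled leaves; at a node querying `x_i`,
the first child corresponds to `x_i = -1` and the second to `x_i = 1`. -/
inductive DTree (n : ℕ) : Type where
  | leaf : Bool → DTree n
  | node : Fin n → DTree n → DTree n → DTree n

namespace DTree

/-- Size = number of leaves. -/
def size {n : ℕ} : DTree n → ℕ
  | leaf _ => 1
  | node _ t0 t1 => t0.size + t1.size

/-- Depth = maximum number of queries on a root-to-leaf path. -/
def depth {n : ℕ} : DTree n → ℕ
  | leaf _ => 0
  | node _ t0 t1 => 1 + max t0.depth t1.depth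

/-- The `±1`-valued function computed by a decision tree. -/
def eval {n : ℕ} : DTree n → (Fin n → Bool) → ℝ
  | leaf b, _ => chiB b
  | node i t0 t1, x => if x i then t1.eval x else t0.eval x

/-- `∑_{leaves ℓ} 2^{-|ℓ|} |ℓ|`: the expected depth of the leaf reached by a uniform input. -/
noncomputable def avgDepth {n : ℕ} : DTree n → ℝ
  | leaf _ => 0
  | node _ t0 t1 => 1 + (1 / 2) * t0.avgDepth + (1 / 2) * t1.avgDepth

/-- Whether `T` queries coordinate `i` on input `x`. -/
def queries {n : ℕ} (i : Fin n) : DTree n → (Fin n → Bool) → Bool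
  | leaf _, _ => false
  | node j t0 t1, x => j = i || (if x j then queries i t1 x else queries i t0 x)

/-- The depth of the leaf reached by input `x`. -/
def pathLen {n : ℕ} : DTree n → (Fin n → Bool) → ℕ
  | leaf _, _ => 0
  | node i t0 t1, x => 1 + (if x i then t1.pathLen x else t0.pathLen x)

end DTree

/-- `error_f(T) = Pr[f(x) ≠ T(x)]` for `x` uniform. -/
noncomputable def errorf {n : ℕ} (f : (Fin n → Bool) → ℝ) (T : DTree n) : ℝ :=
  expect (fun x => if f x = T.eval x then 0 else 1)

/-- `opt_s(f)`: the least error achievable by a decision tree of size at most `s`. -/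
noncomputable def optErr {n : ℕ} (s : ℕ) (f : (Fin n → Bool) → ℝ) : ℝ :=
  sInf { e : ℝ | ∃ T : DTree n, T.size ≤ s ∧ errorf f T = e }

/-- Partial decision trees: internal nodes query coordinates, leaves are unlabeled. -/
inductive PTree (n : ℕ) : Type where
  | leaf : PTree n
  | node : Fin n → PTree n → PTree n → PTree n

namespace PTree

/-- Whether a list of directions (`false` = the `x_i = -1` branch, `true` = the `x_i = 1`
branch) is a path from the root to a leaf. -/
def isLeafPath {n : ℕ} : PTree n → List Bool → Bool
  | .leaf, [] => true
  | .node _ t0 _, false :: p => t0.isLeafPath p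
  | .node _ _ t1, true :: p => t1.isLeafPath p
  | _, _ => false

/-- Replace the leaf at path `p` by an internal node querying `x_i` with two new leaves. -/
def split {n : ℕ} : PTree n → List Bool → Fin n → PTree n
  | .leaf, [], i => .node i .leaf .leaf
  | .node j t0 t1, false :: p, i => .node j (t0.split p i) t1
  | .node j t0 t1, true :: p, i => .node j t0 (t1.split p i)
  | t, _, _ => t

end PTree

/-- The subfunction `f_ℓ` for the leaf `ℓ` at path `p`, viewed as a function on the full
cube (the coordinates queried along the path are fixed accordingly). -/
def pathRestrict {n : ℕ} : PTree n → List Bool → ((Fin n → Bool) → ℝ) → ((Fin n → Bool) → ℝ)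
  | .node j t0 _, false :: p, f => pathRestrict t0 p (restr f j false)
  | .node j _ t1, true :: p, f => pathRestrict t1 p (restr f j true)
  | _, _, f => f

/-- `∑_{leaves ℓ of T°} 2^{-|ℓ|} φ(f_ℓ)`: the leaf-average of a functional `φ` over a partial
tree, each leaf `ℓ` weighted by the probability `2^{-|ℓ|}` that a uniform input reaches it. -/
noncomputable def leafSum {n : ℕ} (φ : ((Fin n → Bool) → ℝ) → ℝ) :
    PTree n → ((Fin n → Bool) → ℝ) → ℝ
  | .leaf, f => φ f
  | .node i t0 t1, f =>
      (1 / 2) * leafSum φ t0 (restr f i false) + (1 / 2) * leafSum φ t1 (restr f i true)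

/-- `NS_δ(f, T°) = ∑_{leaves ℓ of T°} 2^{-|ℓ|} NS_δ(f_ℓ)`. -/
noncomputable def NSwrt {n : ℕ} (δ : ℝ) (f : (Fin n → Bool) → ℝ) (T : PTree n) : ℝ :=
  leafSum (NS δ) T f

/-- `T` is a completion of the partial tree `T°`: same shape, leaves labeled `±1`. -/
def completes {n : ℕ} : PTree n → DTree n → Prop
  | .leaf, .leaf _ => True
  | .node i t0 t1, .node j s0 s1 => i = j ∧ completes t0 s0 ∧ completes t1 s1
  | _, _ => False

/-- `T` is the canonical `f`-completion of `T°`: each leaf `ℓ` is labeled `sign(E[f_ℓ])`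
(with either label allowed in case of a tie `E[f_ℓ] = 0`). -/
def isFCompletion {n : ℕ} : ((Fin n → Bool) → ℝ) → PTree n → DTree n → Prop
  | f, .leaf, .leaf b => (0 < expect f → b = true) ∧ (expect f < 0 → b = false)
  | f, .node i t0 t1, .node j s0 s1 =>
      i = j ∧ isFCompletion (restr f i false) t0 s0 ∧ isFCompletion (restr f i true) t1 s1
  | _, _, _ => False

section Aux

variable {n : ℕ}

lemma chiB_not' (b : Bool) : chiB (!b) = - chiB b := by cases b <;> norm_num [chiB]

/-- The double sum `∑_{x,y} w(x,y) f(x) f(y)` (noise stability). -/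
noncomputable def Tq (δ : ℝ) (f : (Fin n → Bool) → ℝ) : ℝ :=
  ∑ x : Fin n → Bool, ∑ y : Fin n → Bool, noiseWeight δ x y * (f x * f y)

lemma noiseWeight_expand (δ : ℝ) (x y : Fin n → Bool) :
    noiseWeight δ x y =
      ∑ S : Finset (Fin n), ((1:ℝ)/4)^n * ((1-δ)^S.card *
        ((∏ i ∈ S, chiB (x i)) * ∏ i ∈ S, chiB (y i))) := by
  have h1 : noiseWeight δ x y
      = ∏ i : Fin n, ((1:ℝ)/4) * ((1-δ) * (chiB (x i) * chiB (y i)) + 1) := by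
    unfold noiseWeight
    refine Finset.prod_congr rfl fun i _ => ?_
    cases hx : x i <;> cases hy : y i <;> simp [chiB] <;> ring
  rw [h1, Finset.prod_mul_distrib, Finset.prod_const,
    Finset.prod_add, Finset.powerset_univ, Finset.mul_sum]
  simp only [Finset.card_univ, Fintype.card_fin, Finset.prod_const_one, mul_one]
  refine Finset.sum_congr rfl fun S _ => ?_
  rw [Finset.prod_mul_distrib, Finset.prod_const, Finset.prod_mul_distrib]

lemma sum_comm3 {α β γ : Type*} [Fintype α] [Fintype β] [Fintype γ] (g : α → β → γ → ℝ) :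
    ∑ x : α, ∑ y : β, ∑ S : γ, g x y S = ∑ S : γ, ∑ x : α, ∑ y : β, g x y S := by
  have h1 : ∀ x : α, ∑ y : β, ∑ S : γ, g x y S = ∑ S : γ, ∑ y : β, g x y S :=
    fun x => Finset.sum_comm
  simp only [h1]
  exact Finset.sum_comm

lemma Tq_eq (δ : ℝ) (f : (Fin n → Bool) → ℝ) :
    Tq δ f = ∑ S : Finset (Fin n), (1-δ)^S.card * (fcoef f S)^2 := by
  have h2n : ((2:ℝ))^n ≠ 0 := by positivity
  unfold Tq
  simp only [noiseWeight_expand, Finset.sum_mul]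
  rw [sum_comm3]
  refine Finset.sum_congr rfl fun S _ => ?_
  have : ∀ x y : Fin n → Bool,
      ((1:ℝ)/4)^n * ((1-δ)^S.card * ((∏ i ∈ S, chiB (x i)) * ∏ i ∈ S, chiB (y i)))
        * (f x * f y)
      = ((1:ℝ)/4)^n * (1-δ)^S.card *
          ((f x * ∏ i ∈ S, chiB (x i)) * (f y * ∏ i ∈ S, chiB (y i))) := by
    intro x y; ring
  simp only [this]
  have hsum : (∑ x : Fin n → Bool, ∑ y : Fin n → Bool,
      ((1:ℝ)/4)^n * (1-δ)^S.card *
        ((f x * ∏ i ∈ S, chiB (x i)) * (f y * ∏ i ∈ S, chiB (y i)))) =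
    ((1:ℝ)/4)^n * (1-δ)^S.card *
      ((∑ x : Fin n → Bool, f x * ∏ i ∈ S, chiB (x i)) *
       (∑ y : Fin n → Bool, f y * ∏ i ∈ S, chiB (y i))) := by
    rw [Finset.sum_mul_sum, Finset.mul_sum]
    exact Finset.sum_congr rfl fun x _ => by rw [Finset.mul_sum]
  rw [hsum]
  have hfc : fcoef f S = (∑ x : Fin n → Bool, f x * ∏ i ∈ S, chiB (x i)) / 2^n := rfl
  rw [hfc]
  have h4 : ((1:ℝ)/4)^n = (1/2^n) * (1/2^n) := by
    rw [div_pow, one_pow, div_mul_div_comm, ← mul_pow]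
    norm_num
  rw [h4]
  field_simp

lemma charsum_zero {S : Finset (Fin n)} {j : Fin n} (hj : j ∈ S)
    (F : (Fin n → Bool) → ℝ) (hF : ∀ x b, F (Function.update x j b) = F x) :
    ∑ x : Fin n → Bool, F x * ∏ i ∈ S, chiB (x i) = 0 := by
  refine Finset.sum_ninvolution (fun x => Function.update x j (!x j)) ?_ ?_
    (fun _ => Finset.mem_univ _) ?_
  · intro x
    have hFx : F (Function.update x j (!x j)) = F x := hF x _
    have hprod : (∏ i ∈ S, chiB (Function.update x j (!x j) i))
        = - ∏ i ∈ S, chiB (x i) := by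
      rw [← Finset.mul_prod_erase S _ hj, ← Finset.mul_prod_erase S (fun i => chiB (x i)) hj]
      have h1 : ∏ i ∈ S.erase j, chiB (Function.update x j (!x j) i)
          = ∏ i ∈ S.erase j, chiB (x i) := by
        refine Finset.prod_congr rfl fun i hi => ?_
        rw [Function.update_of_ne (Finset.ne_of_mem_erase hi)]
      rw [h1, Function.update_self, chiB_not']
      ring
    rw [hFx, hprod]; ring
  · intro x _
    intro h
    have := congrFun h j
    simp at this
  · intro x
    funext k
    by_cases hk : k = j
    · subst hk; simp
    · simp [Function.update_of_ne hk]

lemma sum_update (i : Fin n) (b : Bool) (G : (Fin n → Bool) → ℝ) :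
    ∑ x : Fin n → Bool, G (Function.update x i b) =
      ∑ x : Fin n → Bool, (if x i = b then 2 else 0) * G x := by
  classical
  have key : ∑ x ∈ Finset.univ.filter (fun x : Fin n → Bool => ¬ x i = b),
        G (Function.update x i b)
      = ∑ x ∈ Finset.univ.filter (fun x : Fin n → Bool => x i = b), G x := by
    refine Finset.sum_nbij' (fun x => Function.update x i b)
      (fun x => Function.update x i (!b)) ?_ ?_ ?_ ?_ ?_
    · intro x _; simp
    · intro x _; simp
    · intro x hx
      simp only [Finset.mem_filter, Finset.mem_univ, true_and] at hx
      have hxb : x i = !b := by cases b <;> simp_all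
      funext k
      by_cases hk : k = i
      · subst hk; simp [hxb]
      · simp [Function.update_of_ne hk]
    · intro x hx
      simp only [Finset.mem_filter, Finset.mem_univ, true_and] at hx
      funext k
      by_cases hk : k = i
      · subst hk; simp [hx]
      · simp [Function.update_of_ne hk]
    · intro x _; rfl
  have lhs : ∑ x : Fin n → Bool, G (Function.update x i b)
      = (∑ x ∈ Finset.univ.filter (fun x : Fin n → Bool => x i = b),
          G (Function.update x i b))
        + ∑ x ∈ Finset.univ.filter (fun x : Fin n → Bool => ¬ x i = b),
          G (Function.update x i b) :=
    (Finset.sum_filter_add_sum_filter_not _ _ _).symm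
  have h1 : ∑ x ∈ Finset.univ.filter (fun x : Fin n → Bool => x i = b),
        G (Function.update x i b)
      = ∑ x ∈ Finset.univ.filter (fun x : Fin n → Bool => x i = b), G x := by
    refine Finset.sum_congr rfl fun x hx => ?_
    simp only [Finset.mem_filter, Finset.mem_univ, true_and] at hx
    congr 1
    funext k
    by_cases hk : k = i
    · subst hk; simp [hx]
    · simp [Function.update_of_ne hk]
  have rhs : ∑ x : Fin n → Bool, (if x i = b then (2:ℝ) else 0) * G x
      = ∑ x ∈ Finset.univ.filter (fun x : Fin n → Bool => x i = b), 2 * G x := by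
    rw [Finset.sum_filter]
    refine Finset.sum_congr rfl fun x _ => ?_
    split <;> simp
  rw [lhs, h1, key, rhs, ← Finset.sum_add_distrib]
  refine Finset.sum_congr rfl fun x _ => ?_
  ring

lemma restr_isPM (f : (Fin n → Bool) → ℝ) (hf : isPM f) (i : Fin n) (b : Bool) :
    isPM (restr f i b) := fun x => hf _

lemma fcoef_restr_mem (f : (Fin n → Bool) → ℝ) (i : Fin n) (b : Bool)
    {S : Finset (Fin n)} (hS : i ∈ S) : fcoef (restr f i b) S = 0 := by
  unfold fcoef _root_.expect
  rw [charsum_zero hS (restr f i b) (fun x c => by simp [restr, Function.update_idem])]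
  simp

lemma fcoef_restr_not_mem (f : (Fin n → Bool) → ℝ) (i : Fin n) (b : Bool)
    {S : Finset (Fin n)} (hS : i ∉ S) :
    fcoef (restr f i b) S = fcoef f S + chiB b * fcoef f (insert i S) := by
  have h2n : ((2:ℝ))^n ≠ 0 := by positivity
  unfold fcoef _root_.expect
  rw [mul_div_assoc', ← add_div]
  congr 1
  have hprodS : ∀ (x : Fin n → Bool) (c : Bool),
      (∏ j ∈ S, chiB (Function.update x i c j)) = ∏ j ∈ S, chiB (x j) := by
    intro x c
    refine Finset.prod_congr rfl fun j hj => ?_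
    rw [Function.update_of_ne (by rintro rfl; exact hS hj)]
  have lhs : ∑ x : Fin n → Bool, restr f i b x * ∏ j ∈ S, chiB (x j)
      = ∑ x : Fin n → Bool,
          (fun y => f y * ∏ j ∈ S, chiB (y j)) (Function.update x i b) := by
    refine Finset.sum_congr rfl fun x _ => ?_
    simp only [restr, hprodS]
  rw [lhs, sum_update i b (fun y => f y * ∏ j ∈ S, chiB (y j)), Finset.mul_sum,
    ← Finset.sum_add_distrib]
  refine Finset.sum_congr rfl fun x _ => ?_
  have hins : (∏ j ∈ insert i S, chiB (x j)) = chiB (x i) * ∏ j ∈ S, chiB (x j) :=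
    Finset.prod_insert hS
  have hite : (if x i = b then (2:ℝ) else 0) = 1 + chiB b * chiB (x i) := by
    cases hx : x i <;> cases b <;> norm_num [chiB]
  simp only [hins, hite]
  ring

lemma NS_eq_Tq (δ : ℝ) (f : (Fin n → Bool) → ℝ) (hf : isPM f) :
    NS δ f = 1/2 - 1/2 * Tq δ f := by
  have mass : (∑ x : Fin n → Bool, ∑ y : Fin n → Bool, noiseWeight δ x y) = 1 := by
    have h2n : ((2:ℝ))^n ≠ 0 := by positivity
    have : (∑ x : Fin n → Bool, ∑ y : Fin n → Bool, noiseWeight δ x y)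
        = Tq (n := n) δ (fun _ => 1) := by
      unfold Tq; simp
    rw [this, Tq_eq]
    have hfc : ∀ S : Finset (Fin n),
        (1-δ)^S.card * (fcoef (fun _ => (1:ℝ)) S)^2 = if S = ∅ then 1 else 0 := by
      intro S
      by_cases hS : S = ∅
      · subst hS
        have hcard : ((Finset.univ : Finset (Fin n → Bool)).card : ℝ) = 2^n := by
          rw [Finset.card_univ, Fintype.card_fun, Fintype.card_bool, Fintype.card_fin]
          push_cast
          ring
        have h1 : fcoef (fun _ => (1:ℝ)) (∅ : Finset (Fin n)) = 1 := by
          unfold fcoef _root_.expect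
          simp only [Finset.prod_empty, mul_one, Finset.sum_const, nsmul_eq_mul]
          rw [hcard, div_self h2n]
        simp [h1]
      · obtain ⟨j, hj⟩ := Finset.nonempty_iff_ne_empty.mpr hS
        have : fcoef (fun _ => (1:ℝ)) S = 0 := by
          unfold fcoef _root_.expect
          rw [charsum_zero hj (fun _ => (1:ℝ)) (fun _ _ => rfl)]
          simp
        simp [this, hS]
    simp only [hfc]
    simp
  have hpt : ∀ x y : Fin n → Bool,
      noiseWeight δ x y * (if f x = f y then (0:ℝ) else 1)
      = (1/2) * noiseWeight δ x y - 1/2 * (noiseWeight δ x y * (f x * f y)) := by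
    intro x y
    rcases hf x with hx | hx <;> rcases hf y with hy | hy <;>
      rw [hx, hy] <;> norm_num <;> ring
  unfold NS Tq
  simp only [hpt, Finset.sum_sub_distrib, ← Finset.mul_sum]
  rw [mass]
  ring

lemma reindex_sum (i : Fin n) (F : Finset (Fin n) → ℝ) :
    (∑ S : Finset (Fin n), if i ∈ S then (0:ℝ) else F (insert i S)) =
      ∑ S : Finset (Fin n), if i ∈ S then F S else 0 := by
  classical
  have l1 : (∑ S : Finset (Fin n), if i ∈ S then (0:ℝ) else F (insert i S))
      = ∑ S ∈ Finset.univ.filter (fun S : Finset (Fin n) => ¬ i ∈ S), F (insert i S) := by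
    rw [Finset.sum_filter]
    exact Finset.sum_congr rfl fun S _ => by split <;> simp_all
  have l2 : (∑ S : Finset (Fin n), if i ∈ S then F S else (0:ℝ))
      = ∑ S ∈ Finset.univ.filter (fun S : Finset (Fin n) => i ∈ S), F S := by
    rw [Finset.sum_filter]
  rw [l1, l2]
  refine Finset.sum_nbij' (fun S => insert i S) (fun S => S.erase i) ?_ ?_ ?_ ?_ ?_
  · intro S hS; simp
  · intro S hS; simp
  · intro S hS
    simp only [Finset.mem_filter, Finset.mem_univ, true_and] at hS
    exact Finset.erase_insert hS
  · intro S hS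
    simp only [Finset.mem_filter, Finset.mem_univ, true_and] at hS
    exact Finset.insert_erase hS
  · intro S _; rfl

end Aux

/-- Lemma 3.3: for `f : {-1,1}ⁿ → {-1,1}`, `i ∈ [n]`, `δ ∈ (0,1)`:
`NS_δ(f) = ½ NS_δ(f_{x_i=-1}) + ½ NS_δ(f_{x_i=1}) + (δ/(2(1-δ))) Inf_i^{(δ)}(f)`. -/
theorem statement2 {n : ℕ} (f : (Fin n → Bool) → ℝ) (hf : isPM f) (i : Fin n)
    (δ : ℝ) (hδ0 : 0 < δ) (hδ1 : δ < 1) :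
    NS δ f = (1 / 2) * NS δ (restr f i false) + (1 / 2) * NS δ (restr f i true)
      + δ / (2 * (1 - δ)) * noisyInf δ i f := by
  have hw0 : (1:ℝ) - δ ≠ 0 := by intro h; nlinarith
  set A := ∑ S : Finset (Fin n),
      (if i ∈ S then (1-δ)^S.card * (fcoef f S)^2 else 0) with hA
  set A' := ∑ S : Finset (Fin n),
      (if i ∈ S then (1-δ)^(S.card - 1) * (fcoef f S)^2 else 0) with hA'
  set B := ∑ S : Finset (Fin n),
      (if i ∈ S then (0:ℝ) else (1-δ)^S.card * (fcoef f S)^2) with hB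
  have hInf : noisyInf δ i f = A := by rw [hA]; rfl
  have hTf : Tq δ f = A + B := by
    rw [Tq_eq, hA, hB, ← Finset.sum_add_distrib]
    refine Finset.sum_congr rfl fun S _ => ?_
    split <;> ring
  have hAA' : A = (1-δ) * A' := by
    rw [hA, hA', Finset.mul_sum]
    refine Finset.sum_congr rfl fun S _ => ?_
    by_cases hS : i ∈ S
    · rw [if_pos hS, if_pos hS]
      have hcard : S.card - 1 + 1 = S.card :=
        Nat.succ_pred_eq_of_pos (Finset.card_pos.mpr ⟨i, hS⟩)
      calc (1-δ)^S.card * (fcoef f S)^2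
          = (1-δ)^(S.card - 1 + 1) * (fcoef f S)^2 := by rw [hcard]
        _ = (1-δ) * ((1-δ)^(S.card - 1) * (fcoef f S)^2) := by rw [pow_succ]; ring
    · simp [hS]
  have hTb : ∀ b : Bool, Tq δ (restr f i b) =
      ∑ S : Finset (Fin n), (if i ∈ S then (0:ℝ)
        else (1-δ)^S.card * (fcoef f S + chiB b * fcoef f (insert i S))^2) := by
    intro b
    rw [Tq_eq]
    refine Finset.sum_congr rfl fun S _ => ?_
    by_cases hS : i ∈ S
    · rw [if_pos hS, fcoef_restr_mem f i b hS]; ring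
    · rw [if_neg hS, fcoef_restr_not_mem f i b hS]
  have hhalf : 1/2 * Tq δ (restr f i false) + 1/2 * Tq δ (restr f i true)
      = B + A' := by
    rw [hTb false, hTb true, Finset.mul_sum, Finset.mul_sum, ← Finset.sum_add_distrib]
    have hre := reindex_sum i
      (fun S : Finset (Fin n) => (1-δ)^(S.card - 1) * (fcoef f S)^2)
    rw [hB, hA', ← hre, ← Finset.sum_add_distrib]
    refine Finset.sum_congr rfl fun S _ => ?_
    by_cases hS : i ∈ S
    · simp [hS]
    · simp only [if_neg hS]
      rw [Finset.card_insert_of_notMem hS]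
      simp only [Nat.add_sub_cancel, chiB]
      norm_num
      ring
  rw [NS_eq_Tq δ f hf, NS_eq_Tq δ _ (restr_isPM f hf i false),
    NS_eq_Tq δ _ (restr_isPM f hf i true), hInf, hTf, hAA']
  have h3 : δ / (2*(1-δ)) * ((1-δ)*A') = δ * A' / 2 := by
    field_simp
  have h4 : (1:ℝ)/2 * (1/2 - 1/2 * Tq δ (restr f i false))
      + 1/2 * (1/2 - 1/2 * Tq δ (restr f i true))
      = 1/2 - 1/2 * (B + A') := by
    rw [← hhalf]; ring
  rw [h4, h3]
  ring
end

section
/- Let T : {−1,1}^n → {−1,1} be computed by a decision tree of size s ≥ 1 and let δ ∈ (0,1). Then NS_δ(T) ≤ δ·log₂ s. -/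
open Finset

noncomputable def cf (δ : ℝ) (a b : Bool) : ℝ := (1 / 2) * (if a = b then 1 - δ / 2 else δ / 2)


noncomputable def Rw {n : ℕ} (δ : ℝ) (i : Fin n) (x y : Fin n → Bool) : ℝ :=
  ∏ j ∈ Finset.univ.erase i, cf δ (x j) (y j)

lemma noiseWeight_eq {n : ℕ} (δ : ℝ) (i : Fin n) (x y : Fin n → Bool) :
    noiseWeight δ x y = cf δ (x i) (y i) * Rw δ i x y := by
  unfold noiseWeight Rw cf
  rw [← Finset.mul_prod_erase _ _ (Finset.mem_univ i)]

lemma Rw_update_left {n : ℕ} (δ : ℝ) (i : Fin n) (x y : Fin n → Bool) (a : Bool) :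
    Rw δ i (Function.update x i a) y = Rw δ i x y := by
  unfold Rw
  refine Finset.prod_congr rfl fun j hj => ?_
  rw [Function.update_of_ne (Finset.ne_of_mem_erase hj) a x]

lemma Rw_update_right {n : ℕ} (δ : ℝ) (i : Fin n) (x y : Fin n → Bool) (a : Bool) :
    Rw δ i x (Function.update y i a) = Rw δ i x y := by
  unfold Rw
  refine Finset.prod_congr rfl fun j hj => ?_
  rw [Function.update_of_ne (Finset.ne_of_mem_erase hj) a y]

def flipE {n : ℕ} (i : Fin n) : (Fin n → Bool) ≃ (Fin n → Bool) :=
  Function.Involutive.toPerm (fun x => Function.update x i (!x i)) (by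
    intro x
    funext j
    by_cases h : j = i
    · subst h; simp
    · simp [Function.update_of_ne h])

lemma sum_update_half {n : ℕ} (i : Fin n) (G : (Fin n → Bool) → ℝ) :
    ∑ x : Fin n → Bool, G x
      = (1 / 2) * ∑ x : Fin n → Bool,
          (G (Function.update x i false) + G (Function.update x i true)) := by
  have key : ∀ x : Fin n → Bool,
      G (Function.update x i false) + G (Function.update x i true)
        = G x + G (flipE i x) := by
    intro x
    cases h : x i
    · have h1 : Function.update x i false = x := by
        conv_lhs => rw [← h]
        exact Function.update_eq_self i x
      have h2 : flipE i x = Function.update x i true := by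
        show Function.update x i (!x i) = _
        rw [h]; rfl
      rw [h1, h2]
    · have h1 : Function.update x i true = x := by
        conv_lhs => rw [← h]
        exact Function.update_eq_self i x
      have h2 : flipE i x = Function.update x i false := by
        show Function.update x i (!x i) = _
        rw [h]; rfl
      rw [h1, h2]
      ring
  rw [Finset.sum_congr rfl fun x _ => key x, Finset.sum_add_distrib,
    Equiv.sum_comp (flipE i) G]
  ring

lemma single_marg {n : ℕ} (i : Fin n) (k : Bool → ℝ) (h : (Fin n → Bool) → ℝ)
    (hh : ∀ x a, h (Function.update x i a) = h x) :
    ∑ x : Fin n → Bool, k (x i) * h x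
      = (1 / 2) * (k false + k true) * ∑ x : Fin n → Bool, h x := by
  rw [sum_update_half i (fun x => k (x i) * h x)]
  have : ∀ x : Fin n → Bool,
      k (Function.update x i false i) * h (Function.update x i false)
        + k (Function.update x i true i) * h (Function.update x i true)
      = (k false + k true) * h x := by
    intro x
    rw [Function.update_self, Function.update_self, hh, hh]
    ring
  rw [Finset.sum_congr rfl fun x _ => this x, ← Finset.mul_sum]
  ring

lemma double_marg {n : ℕ} (i : Fin n) (K : Bool → Bool → ℝ)
    (H : (Fin n → Bool) → (Fin n → Bool) → ℝ)
    (hx : ∀ x y a, H (Function.update x i a) y = H x y)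
    (hy : ∀ x y a, H x (Function.update y i a) = H x y) :
    ∑ x : Fin n → Bool, ∑ y : Fin n → Bool, K (x i) (y i) * H x y
      = (1 / 4) * (K false false + K false true + K true false + K true true)
          * ∑ x : Fin n → Bool, ∑ y : Fin n → Bool, H x y := by
  have step1 : ∀ x : Fin n → Bool,
      ∑ y : Fin n → Bool, K (x i) (y i) * H x y
        = ((1 / 2) * (K (x i) false + K (x i) true)) * ∑ y : Fin n → Bool, H x y := by
    intro x
    exact single_marg i (K (x i)) (H x) (fun y a => hy x y a)
  rw [Finset.sum_congr rfl fun x _ => step1 x]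
  have step2 := single_marg i (fun a => (1 / 2) * (K a false + K a true))
      (fun x => ∑ y : Fin n → Bool, H x y)
      (fun x a => Finset.sum_congr rfl fun y _ => hx x y a)
  rw [step2]
  ring

/-- The indicator of disagreement. -/
noncomputable def Ind (u v : ℝ) : ℝ := if u = v then 0 else 1

lemma sum_sum_noiseWeight {n : ℕ} (δ : ℝ) :
    ∑ x : Fin n → Bool, ∑ y : Fin n → Bool, noiseWeight δ x y = 1 := by
  have inner : ∀ x : Fin n → Bool,
      ∑ y : Fin n → Bool, noiseWeight δ x y = (1 / 2 : ℝ) ^ n := by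
    intro x
    unfold noiseWeight
    rw [← Fintype.prod_sum (fun j b => (1 / 2 : ℝ) * (if x j = b then 1 - δ / 2 else δ / 2))]
    have hj : ∀ j : Fin n,
        (∑ b : Bool, (1 / 2 : ℝ) * (if x j = b then 1 - δ / 2 else δ / 2)) = 1 / 2 := by
      intro j
      rw [Fintype.sum_bool]
      cases h : x j <;> simp [h] <;> ring
    rw [Finset.prod_congr rfl fun j _ => hj j, Finset.prod_const, Finset.card_univ,
      Fintype.card_fin]
  rw [Finset.sum_congr rfl fun x _ => inner x, Finset.sum_const, Finset.card_univ]
  simp [Fintype.card_fun]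


lemma noiseWeight_nonneg {n : ℕ} {δ : ℝ} (h0 : 0 ≤ δ) (h1 : δ ≤ 2) (x y : Fin n → Bool) :
    0 ≤ noiseWeight δ x y := by
  refine Finset.prod_nonneg fun j _ => mul_nonneg (by norm_num) ?_
  split <;> linarith

lemma cf_nonneg {δ : ℝ} (h0 : 0 ≤ δ) (h1 : δ ≤ 2) (a b : Bool) : 0 ≤ cf δ a b := by
  unfold cf
  refine mul_nonneg (by norm_num) ?_
  split <;> linarith

lemma Rw_nonneg {n : ℕ} {δ : ℝ} (h0 : 0 ≤ δ) (h1 : δ ≤ 2) (i : Fin n) (x y : Fin n → Bool) :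
    0 ≤ Rw δ i x y :=
  Finset.prod_nonneg fun j _ => cf_nonneg h0 h1 _ _

lemma NS_nonneg {n : ℕ} {δ : ℝ} (h0 : 0 ≤ δ) (h1 : δ ≤ 2) (f : (Fin n → Bool) → ℝ) :
    0 ≤ NS δ f := by
  refine Finset.sum_nonneg fun x _ => Finset.sum_nonneg fun y _ => mul_nonneg
    (noiseWeight_nonneg h0 h1 x y) ?_
  split <;> norm_num

lemma cf_total (δ : ℝ) :
    cf δ false false + cf δ false true + cf δ true false + cf δ true true = 1 := by
  unfold cf; simp; ring

lemma sum_sum_Rw {n : ℕ} (δ : ℝ) (i : Fin n) :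
    ∑ x : Fin n → Bool, ∑ y : Fin n → Bool, Rw δ i x y = 4 := by
  have h := sum_sum_noiseWeight (n := n) δ
  rw [Finset.sum_congr rfl fun x _ => Finset.sum_congr rfl fun y _ => noiseWeight_eq δ i x y]
    at h
  rw [double_marg i (cf δ) (Rw δ i) (Rw_update_left δ i) (Rw_update_right δ i), cf_total] at h
  linarith

lemma NS_eq_quarter {n : ℕ} (δ : ℝ) (i : Fin n) (h : (Fin n → Bool) → ℝ)
    (hind : ∀ x a, h (Function.update x i a) = h x) :
    ∑ x : Fin n → Bool, ∑ y : Fin n → Bool,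
        Rw δ i x y * (if h x = h y then 0 else 1) = 4 * NS δ h := by
  have key : NS δ h = (1 / 4) * (cf δ false false + cf δ false true + cf δ true false
      + cf δ true true) * ∑ x : Fin n → Bool, ∑ y : Fin n → Bool,
        Rw δ i x y * (if h x = h y then 0 else 1) := by
    unfold NS
    rw [Finset.sum_congr rfl fun x _ => Finset.sum_congr rfl fun y _ => ?_]
    · exact double_marg i (cf δ)
        (fun x y => Rw δ i x y * (if h x = h y then 0 else 1))
        (fun x y a => by simp only [Rw_update_left, hind])
        (fun x y a => by simp only [Rw_update_right, hind])
    · rw [noiseWeight_eq δ i x y]; ring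
  rw [cf_total] at key
  linarith

set_option maxHeartbeats 1000000 in
lemma NS_node {n : ℕ} {δ : ℝ} (hδ0 : 0 < δ) (hδ1 : δ < 1) (i : Fin n)
    (F h0 h1 : (Fin n → Bool) → ℝ)
    (ind0 : ∀ x a, h0 (Function.update x i a) = h0 x)
    (ind1 : ∀ x a, h1 (Function.update x i a) = h1 x)
    (hf : ∀ x, x i = false → F x = h0 x)
    (ht : ∀ x, x i = true → F x = h1 x) :
    NS δ F ≤ δ / 2 + (1 / 2) * NS δ h0 + (1 / 2) * NS δ h1 := by
  have hδ0' : (0:ℝ) ≤ δ := le_of_lt hδ0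
  have hδ2 : δ ≤ 2 := by linarith
  -- pointwise indicator bound
  have point : ∀ x y : Fin n → Bool,
      (if F x = F y then (0:ℝ) else 1)
        ≤ (if x i = y i then 0 else 1)
          + ((if x i = false ∧ y i = false then (1:ℝ) else 0) * (if h0 x = h0 y then 0 else 1)
          + (if x i = true ∧ y i = true then (1:ℝ) else 0) * (if h1 x = h1 y then 0 else 1)) := by
    intro x y
    cases hx : x i <;> cases hy : y i
    · rw [hf x hx, hf y hy]; simp [hx, hy]
    · simp only [hx, hy]; norm_num
      split <;> norm_num
    · simp only [hx, hy]; norm_num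
      split <;> norm_num
    · rw [ht x hx, ht y hy]; simp [hx, hy]
  have wnn := fun x y => noiseWeight_nonneg (n := n) hδ0' hδ2 x y
  have main : NS δ F ≤
      (∑ x : Fin n → Bool, ∑ y : Fin n → Bool,
        noiseWeight δ x y * (if x i = y i then 0 else 1))
      + ((∑ x : Fin n → Bool, ∑ y : Fin n → Bool, noiseWeight δ x y *
          ((if x i = false ∧ y i = false then (1:ℝ) else 0) * (if h0 x = h0 y then 0 else 1)))
      + (∑ x : Fin n → Bool, ∑ y : Fin n → Bool, noiseWeight δ x y *
          ((if x i = true ∧ y i = true then (1:ℝ) else 0) * (if h1 x = h1 y then 0 else 1)))) := by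
    rw [← Finset.sum_add_distrib, ← Finset.sum_add_distrib]
    unfold NS
    refine Finset.sum_le_sum fun x _ => ?_
    rw [← Finset.sum_add_distrib, ← Finset.sum_add_distrib]
    refine Finset.sum_le_sum fun y _ => ?_
    have hb := mul_le_mul_of_nonneg_left (point x y) (wnn x y)
    refine le_trans hb (le_of_eq ?_)
    ring
  -- term 1
  have T1 : ∑ x : Fin n → Bool, ∑ y : Fin n → Bool,
      noiseWeight δ x y * (if x i = y i then 0 else 1) = δ / 2 := by
    have rw1 : ∀ x y : Fin n → Bool,
        noiseWeight δ x y * (if x i = y i then (0:ℝ) else 1)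
          = (fun a b => cf δ a b * (if a = b then (0:ℝ) else 1)) (x i) (y i) * Rw δ i x y := by
      intro x y; rw [noiseWeight_eq δ i x y]; ring
    have hd : ∑ x : Fin n → Bool, ∑ y : Fin n → Bool,
        (fun a b => cf δ a b * (if a = b then (0:ℝ) else 1)) (x i) (y i) * Rw δ i x y
          = (1 / 4) * ((fun a b => cf δ a b * (if a = b then (0:ℝ) else 1)) false false
              + (fun a b => cf δ a b * (if a = b then (0:ℝ) else 1)) false true
              + (fun a b => cf δ a b * (if a = b then (0:ℝ) else 1)) true false
              + (fun a b => cf δ a b * (if a = b then (0:ℝ) else 1)) true true)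
            * ∑ x : Fin n → Bool, ∑ y : Fin n → Bool, Rw δ i x y :=
      double_marg i (fun a b => cf δ a b * (if a = b then (0:ℝ) else 1)) (Rw δ i) (Rw_update_left δ i) (Rw_update_right δ i)
    rw [Finset.sum_congr rfl fun x _ => Finset.sum_congr rfl fun y _ => rw1 x y, hd, sum_sum_Rw]
    unfold cf; norm_num; ring
  -- terms 2 and 3
  have T23 : ∀ (b : Bool) (h : (Fin n → Bool) → ℝ),
      (∀ x a, h (Function.update x i a) = h x) →
      ∑ x : Fin n → Bool, ∑ y : Fin n → Bool,
        noiseWeight δ x y *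
          ((if x i = b ∧ y i = b then (1:ℝ) else 0) * (if h x = h y then 0 else 1))
        ≤ (1 / 2) * NS δ h := by
    intro b h hind
    have rw1 : ∀ x y : Fin n → Bool,
        noiseWeight δ x y *
            ((if x i = b ∧ y i = b then (1:ℝ) else 0) * (if h x = h y then 0 else 1))
          = (fun a c => cf δ a c * (if a = b ∧ c = b then (1:ℝ) else 0)) (x i) (y i)
              * (Rw δ i x y * (if h x = h y then 0 else 1)) := by
      intro x y; rw [noiseWeight_eq δ i x y]; ring
    have hd : ∑ x : Fin n → Bool, ∑ y : Fin n → Bool,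
        (fun a c => cf δ a c * (if a = b ∧ c = b then (1:ℝ) else 0)) (x i) (y i)
          * (Rw δ i x y * (if h x = h y then 0 else 1))
          = (1 / 4) * ((fun a c => cf δ a c * (if a = b ∧ c = b then (1:ℝ) else 0)) false false
              + (fun a c => cf δ a c * (if a = b ∧ c = b then (1:ℝ) else 0)) false true
              + (fun a c => cf δ a c * (if a = b ∧ c = b then (1:ℝ) else 0)) true false
              + (fun a c => cf δ a c * (if a = b ∧ c = b then (1:ℝ) else 0)) true true)
            * ∑ x : Fin n → Bool, ∑ y : Fin n → Bool,
                Rw δ i x y * (if h x = h y then 0 else 1) :=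
      double_marg i (fun a c => cf δ a c * (if a = b ∧ c = b then (1:ℝ) else 0))
        (fun x y => Rw δ i x y * (if h x = h y then 0 else 1))
        (fun x y a => by simp only [Rw_update_left, hind])
        (fun x y a => by simp only [Rw_update_right, hind])
    rw [Finset.sum_congr rfl fun x _ => Finset.sum_congr rfl fun y _ => rw1 x y, hd,
      NS_eq_quarter δ i h hind]
    have hNS : 0 ≤ NS δ h := NS_nonneg hδ0' hδ2 h
    have hcf : cf δ b b = (1/2) * (1 - δ/2) := by unfold cf; simp
    cases b <;> simp [hcf] <;> nlinarith
  have := T23 false h0 ind0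
  have := T23 true h1 ind1
  linarith


def fixT {n : ℕ} (i : Fin n) (b : Bool) : DTree n → DTree n
  | .leaf c => .leaf c
  | .node j t0 t1 =>
      if j = i then (if b then fixT i b t1 else fixT i b t0)
      else .node j (fixT i b t0) (fixT i b t1)

lemma fixT_eval {n : ℕ} (i : Fin n) (b : Bool) (t : DTree n) (x : Fin n → Bool) :
    (fixT i b t).eval x = t.eval (Function.update x i b) := by
  induction t generalizing x with
  | leaf c => rfl
  | node j t0 t1 ih0 ih1 =>
    by_cases h : j = i
    · subst h
      cases b <;> simp [fixT, DTree.eval, ih0, ih1]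
    · simp [fixT, h, DTree.eval, ih0, ih1, Function.update_of_ne (fun hh => h hh.symm)]

lemma size_pos {n : ℕ} (t : DTree n) : 1 ≤ t.size := by
  induction t with
  | leaf c => exact le_refl _
  | node j t0 t1 ih0 ih1 => simp [DTree.size]; omega

lemma fixT_size {n : ℕ} (i : Fin n) (b : Bool) (t : DTree n) :
    (fixT i b t).size ≤ t.size := by
  induction t with
  | leaf c => exact le_refl _
  | node j t0 t1 ih0 ih1 =>
    by_cases h : j = i
    · have h0 := size_pos t0
      have h1 := size_pos t1
      cases b <;> simp [fixT, h, DTree.size] <;> omega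
    · simp [fixT, h, DTree.size]; omega

lemma logb_two_four : Real.logb 2 4 = 2 := by
  rw [show (4:ℝ) = 2 ^ (2:ℕ) by norm_num, Real.logb_pow, Real.logb_self_eq_one] <;> norm_num

lemma logb_node {n : ℕ} (j : Fin n) (t0 t1 : DTree n) :
    2 + Real.logb 2 (t0.size : ℝ) + Real.logb 2 (t1.size : ℝ)
      ≤ 2 * Real.logb 2 (((DTree.node j t0 t1).size : ℝ)) := by
  have p0 : (1:ℝ) ≤ (t0.size : ℝ) := by exact_mod_cast size_pos t0
  have p1 : (1:ℝ) ≤ (t1.size : ℝ) := by exact_mod_cast size_pos t1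
  have hmul : Real.logb 2 (4 * ((t0.size : ℝ) * (t1.size : ℝ)))
      ≤ Real.logb 2 (((t0.size : ℝ) + (t1.size : ℝ)) ^ (2:ℕ)) := by
    apply Real.logb_le_logb_of_le (by norm_num : (1:ℝ) < 2) (by positivity)
    nlinarith [sq_nonneg ((t0.size : ℝ) - (t1.size : ℝ))]
  rw [Real.logb_mul (by norm_num) (by positivity),
    Real.logb_mul (by positivity) (by positivity), Real.logb_pow, logb_two_four] at hmul
  have hcast : ((DTree.node j t0 t1).size : ℝ) = (t0.size : ℝ) + (t1.size : ℝ) := by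
    simp [DTree.size]
  rw [hcast]
  push_cast at hmul
  linarith

lemma NS_leaf {n : ℕ} (δ : ℝ) (c : Bool) : NS (n := n) δ (DTree.eval (.leaf c)) = 0 := by
  unfold NS
  refine Finset.sum_eq_zero fun x _ => Finset.sum_eq_zero fun y _ => ?_
  simp [DTree.eval]

lemma NS_tree {n : ℕ} {δ : ℝ} (hδ0 : 0 < δ) (hδ1 : δ < 1) :
    ∀ (N : ℕ) (t : DTree n), t.size ≤ N →
      NS δ t.eval ≤ (δ / 2) * Real.logb 2 (t.size : ℝ) := by
  intro N
  induction N with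
  | zero => intro t ht; have := size_pos t; omega
  | succ m ih =>
    intro t ht
    cases t with
    | leaf c =>
      rw [show (DTree.leaf c : DTree n).eval = DTree.eval (.leaf c) from rfl, NS_leaf]
      simp [DTree.size]
    | node i t0 t1 =>
      have s0 := size_pos t0
      have s1 := size_pos t1
      have hsize : (DTree.node i t0 t1).size = t0.size + t1.size := rfl
      have ind0 : ∀ (x : Fin n → Bool) (a : Bool),
          (fixT i false t0).eval (Function.update x i a) = (fixT i false t0).eval x := by
        intro x a
        rw [fixT_eval, fixT_eval, Function.update_idem]
      have ind1 : ∀ (x : Fin n → Bool) (a : Bool),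
          (fixT i true t1).eval (Function.update x i a) = (fixT i true t1).eval x := by
        intro x a
        rw [fixT_eval, fixT_eval, Function.update_idem]
      have hf : ∀ x : Fin n → Bool, x i = false →
          (DTree.node i t0 t1).eval x = (fixT i false t0).eval x := by
        intro x hx
        rw [fixT_eval, show Function.update x i false = x from by
          rw [← hx]; exact Function.update_eq_self i x]
        simp [DTree.eval, hx]
      have htr : ∀ x : Fin n → Bool, x i = true →
          (DTree.node i t0 t1).eval x = (fixT i true t1).eval x := by
        intro x hx
        rw [fixT_eval, show Function.update x i true = x from by
          rw [← hx]; exact Function.update_eq_self i x]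
        simp [DTree.eval, hx]
      have key := NS_node hδ0 hδ1 i ((DTree.node i t0 t1).eval)
        ((fixT i false t0).eval) ((fixT i true t1).eval) ind0 ind1 hf htr
      have ih0 := ih (fixT i false t0) (le_trans (fixT_size i false t0) (by omega))
      have ih1 := ih (fixT i true t1) (le_trans (fixT_size i true t1) (by omega))
      have L0 : Real.logb 2 ((fixT i false t0).size : ℝ) ≤ Real.logb 2 (t0.size : ℝ) :=
        Real.logb_le_logb_of_le (by norm_num)
          (by exact_mod_cast size_pos (fixT i false t0)) (by exact_mod_cast fixT_size i false t0)
      have L1 : Real.logb 2 ((fixT i true t1).size : ℝ) ≤ Real.logb 2 (t1.size : ℝ) :=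
        Real.logb_le_logb_of_le (by norm_num)
          (by exact_mod_cast size_pos (fixT i true t1)) (by exact_mod_cast fixT_size i true t1)
      have hlog := logb_node i t0 t1
      have e0 : (δ / 4) * Real.logb 2 ((fixT i false t0).size : ℝ)
          ≤ (δ / 4) * Real.logb 2 (t0.size : ℝ) :=
        mul_le_mul_of_nonneg_left L0 (by linarith)
      have e1 : (δ / 4) * Real.logb 2 ((fixT i true t1).size : ℝ)
          ≤ (δ / 4) * Real.logb 2 (t1.size : ℝ) :=
        mul_le_mul_of_nonneg_left L1 (by linarith)
      have e2 : 0 ≤ (δ / 4) * (2 * Real.logb 2 (((DTree.node i t0 t1).size : ℝ))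
          - (2 + Real.logb 2 (t0.size : ℝ) + Real.logb 2 (t1.size : ℝ))) :=
        mul_nonneg (by linarith) (by linarith)
      nlinarith [key, ih0, ih1, e0, e1, e2]

/-- Fact 5.2: a function computed by a decision tree of size `s ≥ 1`
has noise sensitivity `NS_δ(T) ≤ δ log₂ s`. -/
theorem statement5 {n : ℕ} (T : DTree n) (s : ℕ) (hsize : T.size = s) (hs : 1 ≤ s)
    (δ : ℝ) (hδ0 : 0 < δ) (hδ1 : δ < 1) :
    NS δ T.eval ≤ δ * Real.logb 2 s := by
  subst hsize
  have h := NS_tree hδ0 hδ1 T.size T le_rfl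
  have hl : 0 ≤ Real.logb 2 (T.size : ℝ) :=
    Real.logb_nonneg (by norm_num) (by exact_mod_cast size_pos T)
  have : (δ / 2) * Real.logb 2 (T.size : ℝ) ≤ δ * Real.logb 2 (T.size : ℝ) := by nlinarith
  linarith
end

section
/- Let f : {−1,1}^n → {−1,1}, δ, κ ∈ (0,1) with NS_δ(f) ≤ κ, and let T° be any partial decision tree over {−1,1}^n. Then Σ_{leaves ℓ of T°} 2^{−|ℓ|}·E[((f_ℓ)_δ(x) − f_ℓ(x))²] ≤ 4κ, where the expectation is over x uniform on the subcube corresponding to ℓ. -/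
open Finset

namespace S7
variable {n : ℕ}

noncomputable def chi (S : Finset (Fin n)) (x : Fin n → Bool) : ℝ := ∏ i ∈ S, chiB (x i)

lemma sum_prod_bool (g : Fin n → Bool → ℝ) :
    ∑ x : Fin n → Bool, ∏ i, g i (x i) = ∏ i, (g i false + g i true) := by
  have : ∏ i, (g i false + g i true) = ∏ i, ∑ b : Bool, g i b := by
    simp [Fintype.sum_bool, add_comm]
  rw [this, Finset.prod_univ_sum]
  have h2 : (Fintype.piFinset fun _ : Fin n => (univ : Finset Bool)) = univ :=
    Fintype.piFinset_univ
  have h3 : (univ : Finset Bool) = {true, false} := by ext b; cases b <;> simp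
  rw [← h3] at *
  rw [h2]

lemma sum_chi_mul (x y : Fin n → Bool) :
    ∑ S : Finset (Fin n), chi S x * chi S y = if x = y then (2:ℝ)^n else 0 := by
  have h1 : ∀ S : Finset (Fin n), chi S x * chi S y
      = ∏ i ∈ S, (chiB (x i) * chiB (y i)) := by
    intro S; rw [chi, chi, ← Finset.prod_mul_distrib]
  calc ∑ S : Finset (Fin n), chi S x * chi S y
      = ∑ S ∈ (univ : Finset (Fin n)).powerset, ∏ i ∈ S, (chiB (x i) * chiB (y i)) := by
        rw [Finset.powerset_univ]; exact Finset.sum_congr rfl fun S _ => h1 S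
    _ = ∑ S ∈ (univ : Finset (Fin n)).powerset,
          (∏ i ∈ S, (chiB (x i) * chiB (y i))) * ∏ i ∈ (univ : Finset (Fin n)) \ S, 1 := by
        simp
    _ = ∏ i : Fin n, (chiB (x i) * chiB (y i) + 1) := (Finset.prod_add _ _ _).symm
    _ = if x = y then (2:ℝ)^n else 0 := by
        by_cases h : x = y
        · subst h
          simp only [if_pos rfl]
          have : ∀ i, chiB (x i) * chiB (x i) + 1 = 2 := by
            intro i; cases x i <;> simp [chiB] <;> norm_num
          rw [Finset.prod_congr rfl fun i _ => this i]; simp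
        · rw [if_neg h]
          obtain ⟨i, hi⟩ : ∃ i, x i ≠ y i := by
            by_contra hc; push_neg at hc; exact h (funext hc)
          refine Finset.prod_eq_zero (Finset.mem_univ i) ?_
          cases hx : x i <;> cases hy : y i <;> simp_all [chiB]

lemma parseval (F G : (Fin n → Bool) → ℝ) :
    expect (fun x => F x * G x) = ∑ S : Finset (Fin n), fcoef F S * fcoef G S := by
  have key : ∑ S : Finset (Fin n),
      (∑ x : Fin n → Bool, F x * chi S x) * (∑ y : Fin n → Bool, G y * chi S y)
      = (2:ℝ)^n * ∑ x : Fin n → Bool, F x * G x := by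
    have : ∀ S : Finset (Fin n),
        (∑ x : Fin n → Bool, F x * chi S x) * (∑ y : Fin n → Bool, G y * chi S y)
        = ∑ x : Fin n → Bool, ∑ y : Fin n → Bool, (F x * G y) * (chi S x * chi S y) := by
      intro S; rw [Finset.sum_mul_sum]
      exact Finset.sum_congr rfl fun x _ => Finset.sum_congr rfl fun y _ => by ring
    rw [Finset.sum_congr rfl fun S _ => this S]
    rw [Finset.sum_comm]
    have : ∀ x : Fin n → Bool, ∑ S : Finset (Fin n), ∑ y : Fin n → Bool,
        (F x * G y) * (chi S x * chi S y)
        = F x * G x * (2:ℝ)^n := by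
      intro x
      rw [Finset.sum_comm]
      have : ∀ y : Fin n → Bool, ∑ S : Finset (Fin n), (F x * G y) * (chi S x * chi S y)
          = F x * G y * (if x = y then (2:ℝ)^n else 0) := by
        intro y; rw [← Finset.mul_sum, sum_chi_mul]
      rw [Finset.sum_congr rfl fun y _ => this y]
      simp [Finset.sum_ite_eq, mul_comm]
    rw [Finset.sum_congr rfl fun x _ => this x, ← Finset.sum_mul]
    ring
  have hne : ((2:ℝ)^n) ≠ 0 := by positivity
  have hS : ∀ S : Finset (Fin n), fcoef F S * fcoef G S
      = ((∑ x : Fin n → Bool, F x * chi S x) * (∑ y : Fin n → Bool, G y * chi S y))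
        / ((2:ℝ)^n * (2:ℝ)^n) := by
    intro S; unfold fcoef _root_.expect chi
    rw [div_mul_div_comm]
  rw [Finset.sum_congr rfl fun S _ => hS S, ← Finset.sum_div, key]
  unfold _root_.expect
  field_simp

variable {δ : ℝ}

lemma fcoef_smooth (g : (Fin n → Bool) → ℝ) (S : Finset (Fin n)) :
    fcoef (smooth δ g) S = (1-δ)^S.card * fcoef g S := by
  have inner : ∀ y : Fin n → Bool,
      ∑ x : Fin n → Bool, (∏ i : Fin n, if x i = y i then 1 - δ / 2 else δ / 2) * chi S x
      = (1-δ)^S.card * chi S y := by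
    intro y
    have e1 : ∀ x : Fin n → Bool,
        (∏ i : Fin n, if x i = y i then 1 - δ / 2 else δ / 2) * chi S x
        = ∏ i : Fin n, ((if x i = y i then 1 - δ / 2 else δ / 2) *
            (if i ∈ S then chiB (x i) else 1)) := by
      intro x
      rw [Finset.prod_mul_distrib, chi]
      congr 1
      rw [Finset.prod_ite_mem, Finset.univ_inter]
    rw [Finset.sum_congr rfl fun x _ => e1 x,
      sum_prod_bool (fun i b => (if b = y i then 1 - δ / 2 else δ / 2) *
        (if i ∈ S then chiB b else 1))]
    have e2 : ∀ i : Fin n, ((if false = y i then 1 - δ / 2 else δ / 2) *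
            (if i ∈ S then chiB false else 1)
        + (if true = y i then 1 - δ / 2 else δ / 2) * (if i ∈ S then chiB true else 1))
        = if i ∈ S then (1-δ) * chiB (y i) else 1 := by
      intro i
      by_cases hi : i ∈ S <;> cases hy : y i <;> simp [hi, hy, chiB] <;> ring
    rw [Finset.prod_congr rfl fun i _ => e2 i, Finset.prod_ite_mem, Finset.univ_inter,
      Finset.prod_mul_distrib, Finset.prod_const, chi]
  unfold fcoef _root_.expect smooth
  rw [← mul_div_assoc]
  congr 1
  have swap : ∀ x : Fin n → Bool,
      (∑ y : Fin n → Bool, (∏ i : Fin n, if x i = y i then 1 - δ / 2 else δ / 2) * g y)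
        * (∏ i ∈ S, chiB (x i))
      = ∑ y : Fin n → Bool,
          g y * ((∏ i : Fin n, if x i = y i then 1 - δ / 2 else δ / 2) * chi S x) := by
    intro x; rw [Finset.sum_mul]
    exact Finset.sum_congr rfl fun y _ => by rw [chi]; ring
  rw [Finset.sum_congr rfl fun x _ => swap x, Finset.sum_comm]
  rw [Finset.mul_sum]
  refine Finset.sum_congr rfl fun y _ => ?_
  rw [← Finset.mul_sum, inner, chi]
  ring

/-- flip coordinate i -/
def flip (i : Fin n) (x : Fin n → Bool) : Fin n → Bool := Function.update x i (!(x i))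

lemma flip_flip (i : Fin n) (x : Fin n → Bool) : flip i (flip i x) = x := by
  unfold flip
  rw [Function.update_idem]
  simp [Function.update_self]

lemma sum_flip (i : Fin n) (F : (Fin n → Bool) → ℝ) :
    ∑ x : Fin n → Bool, F (flip i x) = ∑ x : Fin n → Bool, F x := by
  have hb : Function.Bijective (flip i (n := n)) :=
    Function.Involutive.bijective (fun x => flip_flip i x)
  exact Fintype.sum_bijective (flip i) hb _ _ (fun x => rfl)

lemma sum_pair (i : Fin n) (F G : (Fin n → Bool) → ℝ)
    (h : ∀ x, F x + F (flip i x) = G x + G (flip i x)) :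
    ∑ x : Fin n → Bool, F x = ∑ x : Fin n → Bool, G x := by
  have h2 : ∑ x : Fin n → Bool, (F x + F (flip i x))
      = ∑ x : Fin n → Bool, (G x + G (flip i x)) :=
    Finset.sum_congr rfl fun x _ => h x
  rw [Finset.sum_add_distrib, Finset.sum_add_distrib, sum_flip, sum_flip] at h2
  linarith


lemma chiB_not (b : Bool) : chiB (!b) = -chiB b := by cases b <;> simp [chiB]

lemma chi_update_not_mem (S : Finset (Fin n)) {i : Fin n} (hi : i ∉ S) (x : Fin n → Bool)
    (c : Bool) : chi S (Function.update x i c) = chi S x := by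
  unfold chi
  refine Finset.prod_congr rfl fun j hj => ?_
  have : j ≠ i := by rintro rfl; exact hi hj
  rw [Function.update_of_ne this _ _]

lemma chi_mem (S : Finset (Fin n)) {i : Fin n} (hi : i ∈ S) (x : Fin n → Bool) :
    chi S x = chiB (x i) * ∏ j ∈ S.erase i, chiB (x j) := by
  unfold chi
  rw [← Finset.prod_erase_mul S _ hi]; ring

lemma fcoef_restr_mem (g : (Fin n → Bool) → ℝ) {i : Fin n} (b : Bool) {S : Finset (Fin n)}
    (hi : i ∈ S) : fcoef (restr g i b) S = 0 := by
  have key : ∑ x : Fin n → Bool, restr g i b x * chi S x = ∑ x : Fin n → Bool, (0:ℝ) := by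
    refine sum_pair i _ _ fun x => ?_
    have h1 : restr g i b (flip i x) = restr g i b x := by
      unfold restr flip; rw [Function.update_idem]
    have h2 : chi S (flip i x) = chiB (!(x i)) * ∏ j ∈ S.erase i, chiB (x j) := by
      rw [chi_mem S hi]
      unfold flip
      rw [Function.update_self]
      congr 1
      refine Finset.prod_congr rfl fun j hj => ?_
      rw [Function.update_of_ne (Finset.ne_of_mem_erase hj) _ _]
    rw [h1, h2, chi_mem S hi x, chiB_not]
    ring
  unfold fcoef _root_.expect
  simp only [Finset.sum_const, smul_zero] at key
  rw [show (fun x => restr g i b x * ∏ j ∈ S, chiB (x j)) = fun x => restr g i b x * chi S x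
    from rfl] at *
  rw [key]
  simp

lemma fcoef_restr_not_mem (g : (Fin n → Bool) → ℝ) {i : Fin n} (b : Bool) {S : Finset (Fin n)}
    (hi : i ∉ S) :
    fcoef (restr g i b) S = fcoef g S + chiB b * fcoef g (insert i S) := by
  have hins : ∀ x, chi (insert i S) x = chiB (x i) * chi S x := by
    intro x; unfold chi; rw [Finset.prod_insert hi]
  have key : ∑ x : Fin n → Bool, restr g i b x * chi S x
      = ∑ x : Fin n → Bool, (g x * chi S x + chiB b * (g x * (chiB (x i) * chi S x))) := by
    refine sum_pair i _ _ fun x => ?_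
    have hcf : chi S (flip i x) = chi S x := chi_update_not_mem S hi x _
    have h1 : restr g i b (flip i x) = restr g i b x := by
      unfold restr flip; rw [Function.update_idem]
    have hfi : (flip i x) i = !(x i) := Function.update_self _ _ _
    rw [h1, hcf, hfi, chiB_not]
    unfold restr
    cases b <;> cases hx : x i
    · have h' : Function.update x i false = x := by rw [← hx]; exact Function.update_eq_self i x
      rw [h']; simp [chiB]
    · have h' : Function.update x i false = flip i x := by simp [flip, hx]
      rw [h']; simp [chiB]
    · have h' : Function.update x i true = flip i x := by simp [flip, hx]
      rw [h']; simp [chiB]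
    · have h' : Function.update x i true = x := by rw [← hx]; exact Function.update_eq_self i x
      rw [h']; simp [chiB]
  unfold fcoef _root_.expect
  rw [show (fun x => restr g i b x * ∏ j ∈ S, chiB (x j)) = fun x => restr g i b x * chi S x
    from rfl]
  rw [key, Finset.sum_add_distrib, add_div]
  congr 1
  rw [← Finset.mul_sum, mul_div_assoc]
  congr 1
  have h4 : ∑ x : Fin n → Bool, g x * (chiB (x i) * chi S x)
      = ∑ x : Fin n → Bool, g x * chi (insert i S) x :=
    Finset.sum_congr rfl fun x _ => by rw [hins x]
  rw [h4]
  rfl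

lemma sum_split_insert (i : Fin n) (F : Finset (Fin n) → ℝ) :
    ∑ S : Finset (Fin n), F S
    = ∑ S ∈ univ.filter (fun S => i ∉ S), (F S + F (insert i S)) := by
  rw [Finset.sum_add_distrib]
  rw [← Finset.sum_filter_add_sum_filter_not univ (fun S => i ∉ S) F]
  congr 1
  refine (Finset.sum_bij' (fun S _ => insert i S) (fun S _ => S.erase i) ?_ ?_ ?_ ?_ ?_).symm
  · intro S hS
    simp only [Finset.mem_filter, Finset.mem_univ, true_and, not_not] at hS ⊢
    exact Finset.mem_insert_self i S
  · intro S hS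
    simp only [Finset.mem_filter, Finset.mem_univ, true_and, not_not] at hS ⊢
    exact Finset.notMem_erase i S
  · intro S hS
    simp only [Finset.mem_filter, Finset.mem_univ, true_and] at hS
    exact Finset.erase_insert hS
  · intro S hS
    simp only [Finset.mem_filter, Finset.mem_univ, true_and, not_not] at hS
    exact Finset.insert_erase hS
  · intro S hS; rfl

noncomputable def Psi (δ : ℝ) (g : (Fin n → Bool) → ℝ) : ℝ :=
  ∑ S : Finset (Fin n), (1 - (1-δ)^S.card) * (fcoef g S)^2

lemma fcoef_sub (F G : (Fin n → Bool) → ℝ) (S : Finset (Fin n)) :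
    fcoef (fun x => F x - G x) S = fcoef F S - fcoef G S := by
  unfold fcoef _root_.expect
  rw [← sub_div, ← Finset.sum_sub_distrib]
  congr 1
  exact Finset.sum_congr rfl fun x _ => by ring

lemma Psi_eq (g : (Fin n → Bool) → ℝ) :
    Psi δ g = expect (fun x => g x * g x) - expect (fun x => g x * smooth δ g x) := by
  rw [parseval, parseval, ← Finset.sum_sub_distrib]
  refine Finset.sum_congr rfl fun S _ => ?_
  rw [fcoef_smooth]; ring

lemma Phi_le_Psi (hδ0 : 0 ≤ δ) (hδ1 : δ ≤ 1) (g : (Fin n → Bool) → ℝ) :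
    expect (fun x => (smooth δ g x - g x)^2) ≤ Psi δ g := by
  have hp : expect (fun x => (smooth δ g x - g x)^2)
      = ∑ S : Finset (Fin n), ((1-δ)^S.card - 1)^2 * (fcoef g S)^2 := by
    have h := parseval (fun x => smooth δ g x - g x) (fun x => smooth δ g x - g x)
    rw [show (fun x => (smooth δ g x - g x)^2)
      = fun x => (smooth δ g x - g x) * (smooth δ g x - g x) from funext fun x => sq _, h]
    refine Finset.sum_congr rfl fun S _ => ?_
    rw [fcoef_sub, fcoef_smooth]; ring
  rw [hp]
  unfold Psi
  refine Finset.sum_le_sum fun S _ => ?_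
  have h1 : 0 ≤ (1-δ)^S.card := pow_nonneg (by linarith) _
  have h2 : (1-δ)^S.card ≤ 1 := pow_le_one₀ (by linarith) (by linarith)
  have h3 : 0 ≤ fcoef g S ^ 2 := sq_nonneg _
  have key : ((1-δ)^S.card - 1)^2 ≤ 1 - (1-δ)^S.card := by
    nlinarith [mul_nonneg h1 (by linarith : (0:ℝ) ≤ 1 - (1-δ)^S.card)]
  exact mul_le_mul_of_nonneg_right key h3

lemma Psi_split (hδ0 : 0 ≤ δ) (hδ1 : δ ≤ 1) (g : (Fin n → Bool) → ℝ) (i : Fin n) :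
    (1/2) * Psi δ (restr g i false) + (1/2) * Psi δ (restr g i true) ≤ Psi δ g := by
  have L : (1/2) * Psi δ (restr g i false) + (1/2) * Psi δ (restr g i true)
      = ∑ S : Finset (Fin n), (1 - (1-δ)^S.card) *
          ((fcoef (restr g i false) S)^2 / 2 + (fcoef (restr g i true) S)^2 / 2) := by
    unfold Psi
    rw [Finset.mul_sum, Finset.mul_sum, ← Finset.sum_add_distrib]
    exact Finset.sum_congr rfl fun S _ => by ring
  rw [L, Psi, sum_split_insert i, sum_split_insert i
    (fun S => (1 - (1-δ)^S.card) * (fcoef g S)^2)]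
  refine Finset.sum_le_sum fun S hS => ?_
  have hiS : i ∉ S := by
    simp only [Finset.mem_filter, Finset.mem_univ, true_and] at hS; exact hS
  have hmem : i ∈ insert i S := Finset.mem_insert_self i S
  rw [fcoef_restr_mem g false hmem, fcoef_restr_mem g true hmem,
    fcoef_restr_not_mem g false hiS, fcoef_restr_not_mem g true hiS,
    Finset.card_insert_of_notMem hiS]
  set A := fcoef g S
  set B := fcoef g (insert i S)
  set r := (1-δ)^S.card with hr
  have h1 : 0 ≤ r := pow_nonneg (by linarith) _
  have h2 : (1-δ)^(S.card + 1) = r * (1-δ) := by rw [hr, pow_succ]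
  rw [h2]
  have hb : chiB false = -1 := rfl
  have ht : chiB true = 1 := rfl
  rw [hb, ht]
  nlinarith [mul_nonneg (mul_nonneg h1 (by linarith : (0:ℝ) ≤ δ)) (sq_nonneg B)]

lemma kernel_row_sum (x : Fin n → Bool) :
    ∑ y : Fin n → Bool, (∏ i : Fin n, if x i = y i then 1 - δ/2 else δ/2) = 1 := by
  rw [sum_prod_bool (fun i b => if x i = b then 1 - δ/2 else δ/2)]
  rw [Finset.prod_congr rfl fun i _ => (by cases hx : x i <;> simp [hx] :
    ((if x i = false then 1 - δ/2 else δ/2) + (if x i = true then 1 - δ/2 else δ/2)) = 1)]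
  simp


lemma two_NS {n : ℕ} (δ : ℝ) (f : (Fin n → Bool) → ℝ) (hf : isPM f) :
    2 * NS δ f = expect (fun x => f x * f x) - expect (fun x => f x * smooth δ f x) := by
  have hw : ∀ x y : Fin n → Bool, noiseWeight δ x y
      = (1/2:ℝ)^n * ∏ i : Fin n, (if x i = y i then 1 - δ/2 else δ/2) := by
    intro x y; unfold noiseWeight
    rw [Finset.prod_mul_distrib, Finset.prod_const]
    congr 1
    simp
  have hpm : ∀ x y : Fin n → Bool,
      2 * (if f x = f y then (0:ℝ) else 1) = f x * f x - f x * f y := by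
    intro x y
    by_cases h : f x = f y
    · rw [if_pos h, h]; ring
    · rw [if_neg h]
      rcases hf x with hx | hx <;> rcases hf y with hy | hy <;>
        rw [hx, hy] at h ⊢ <;> norm_num at h <;> norm_num
  have step : ∀ x : Fin n → Bool,
      ∑ y : Fin n → Bool, 2 * (noiseWeight δ x y * (if f x = f y then (0:ℝ) else 1))
      = (1/2:ℝ)^n * (f x * f x - f x * smooth δ f x) := by
    intro x
    have t : ∀ y : Fin n → Bool,
        2 * (noiseWeight δ x y * (if f x = f y then (0:ℝ) else 1))
        = (1/2:ℝ)^n * ((∏ i : Fin n, if x i = y i then 1 - δ/2 else δ/2) * (f x * f x)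
            - (∏ i : Fin n, if x i = y i then 1 - δ/2 else δ/2) * (f x * f y)) := by
      intro y
      have e1 : 2 * (noiseWeight δ x y * (if f x = f y then (0:ℝ) else 1))
          = (1/2:ℝ)^n * ((∏ i : Fin n, if x i = y i then 1 - δ/2 else δ/2) *
              (2 * (if f x = f y then (0:ℝ) else 1))) := by
        rw [hw x y]; ring
      rw [e1, hpm x y]; ring
    rw [Finset.sum_congr rfl fun y _ => t y, ← Finset.mul_sum]
    congr 1
    rw [Finset.sum_sub_distrib]
    have e2 : ∑ y : Fin n → Bool,
        (∏ i : Fin n, if x i = y i then 1 - δ/2 else δ/2) * (f x * f x)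
        = f x * f x := by
      rw [← Finset.sum_mul, kernel_row_sum, one_mul]
    have e3 : ∑ y : Fin n → Bool,
        (∏ i : Fin n, if x i = y i then 1 - δ/2 else δ/2) * (f x * f y)
        = f x * smooth δ f x := by
      unfold smooth
      rw [Finset.mul_sum]
      exact Finset.sum_congr rfl fun y _ => by ring
    rw [e2, e3]
  have main : 2 * NS δ f
      = (1/2:ℝ)^n * ∑ x : Fin n → Bool, (f x * f x - f x * smooth δ f x) := by
    unfold NS
    rw [Finset.mul_sum, Finset.sum_congr rfl fun x _ => by
      rw [Finset.mul_sum, step x], ← Finset.mul_sum]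
  rw [main]
  unfold _root_.expect
  rw [Finset.sum_sub_distrib]
  have hpow : (1/2:ℝ)^n = 1/(2:ℝ)^n := by rw [div_pow, one_pow]
  rw [hpow]
  ring

lemma leafSum_le {n : ℕ} (δ : ℝ) (hδ0 : 0 ≤ δ) (hδ1 : δ ≤ 1) (T : PTree n) :
    ∀ g : (Fin n → Bool) → ℝ,
      leafSum (fun g => expect (fun x => (smooth δ g x - g x)^2)) T g ≤ Psi δ g := by
  induction T with
  | leaf => intro g; exact Phi_le_Psi hδ0 hδ1 g
  | node i t0 t1 ih0 ih1 =>
    intro g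
    have heq : leafSum (fun g => expect (fun x => (smooth δ g x - g x)^2)) (PTree.node i t0 t1) g
        = (1/2) * leafSum (fun g => expect (fun x => (smooth δ g x - g x)^2)) t0 (restr g i false)
          + (1/2) * leafSum (fun g => expect (fun x => (smooth δ g x - g x)^2)) t1
              (restr g i true) := rfl
    rw [heq]
    have h0 := ih0 (restr g i false)
    have h1 := ih1 (restr g i true)
    have h2 := Psi_split hδ0 hδ1 g i
    linarith


end S7

/-- Proposition 5.4: if `NS_δ(f) ≤ κ` then for any partial tree `T°`,
`∑_{leaves ℓ} 2^{-|ℓ|} E[((f_ℓ)_δ(x) - f_ℓ(x))²] ≤ 4κ`. -/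
theorem statement7 {n : ℕ} (f : (Fin n → Bool) → ℝ) (hf : isPM f)
    (δ κ : ℝ) (hδ0 : 0 < δ) (hδ1 : δ < 1) (hκ0 : 0 < κ) (hκ1 : κ < 1)
    (hNS : NS δ f ≤ κ) (T : PTree n) :
    leafSum (fun g => expect (fun x => (smooth δ g x - g x) ^ 2)) T f ≤ 4 * κ := by
  have h1 := S7.leafSum_le δ (le_of_lt hδ0) (le_of_lt hδ1) T f
  have h2 : S7.Psi δ f = 2 * NS δ f := (S7.Psi_eq f).trans (S7.two_NS δ f hf).symm
  have h3 : 2 * NS δ f ≤ 2 * κ := by linarith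
  calc leafSum (fun g => expect fun x => (smooth δ g x - g x) ^ 2) T f
      ≤ S7.Psi δ f := h1
    _ = 2 * NS δ f := h2
    _ ≤ 2 * κ := h3
    _ ≤ 4 * κ := by linarith
end

section
/- For every function f : {−1,1}^n → {−1,1}, every δ ∈ (0,1), and every partial decision tree T° over {−1,1}^n, NS_δ(f, T°) ≤ NS_δ(f). In particular, splitting any leaf of a partial decision tree never increases NS_δ(f, ·). -/
open Finset

section Aux

variable {n : ℕ}

/-- Per-coordinate noise factor. -/
noncomputable def mfac (δ : ℝ) (a c : Bool) : ℝ :=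
  (1 / 2) * (if a = c then 1 - δ / 2 else δ / 2)

lemma noiseWeight_eq_prod (δ : ℝ) (x y : Fin n → Bool) :
    noiseWeight δ x y = ∏ i : Fin n, mfac δ (x i) (y i) := rfl

lemma mfac_eq_chi (δ : ℝ) (a c : Bool) :
    mfac δ a c = 1 / 4 + (1 - δ) / 4 * (chiB a * chiB c) := by
  cases a <;> cases c <;> simp [mfac, chiB] <;> ring

/-- Correlation / stability quantity. -/
noncomputable def Stab (δ : ℝ) (f : (Fin n → Bool) → ℝ) : ℝ :=
  ∑ x : Fin n → Bool, ∑ y : Fin n → Bool, noiseWeight δ x y * (f x * f y)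

lemma sum_noiseWeight (δ : ℝ) (x : Fin n → Bool) :
    ∑ y : Fin n → Bool, noiseWeight δ x y = (1 / 2 : ℝ) ^ n := by
  have h := Fintype.prod_sum (fun (i : Fin n) (b : Bool) => mfac δ (x i) b)
  have h2 : ∑ y : Fin n → Bool, noiseWeight δ x y
      = ∏ i : Fin n, ∑ b : Bool, mfac δ (x i) b := by
    rw [h]; rfl
  rw [h2]
  have h3 : ∀ i : Fin n, ∑ b : Bool, mfac δ (x i) b = 1 / 2 := by
    intro i
    cases hb : x i <;> simp [Fintype.sum_bool, mfac] <;> ring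
  rw [Finset.prod_congr rfl fun i _ => h3 i, Finset.prod_const, Finset.card_univ,
    Fintype.card_fin]

lemma total_noiseWeight (δ : ℝ) :
    ∑ x : Fin n → Bool, ∑ y : Fin n → Bool, noiseWeight δ x y = 1 := by
  rw [Finset.sum_congr rfl fun x _ => sum_noiseWeight δ x, Finset.sum_const,
    Finset.card_univ]
  have : Fintype.card (Fin n → Bool) = 2 ^ n := by
    simp [Fintype.card_fun]
  rw [this, nsmul_eq_mul]
  push_cast
  rw [← mul_pow]
  norm_num

lemma NS_eq_stab (δ : ℝ) (f : (Fin n → Bool) → ℝ) (hf : isPM f) :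
    NS δ f = 1 / 2 - Stab δ f / 2 := by
  have hpt : ∀ x y : Fin n → Bool,
      noiseWeight δ x y * (if f x = f y then 0 else 1)
        = noiseWeight δ x y * (1 / 2) - noiseWeight δ x y * (f x * f y) * (1 / 2) := by
    intro x y
    rcases hf x with h1 | h1 <;> rcases hf y with h2 | h2 <;> rw [h1, h2] <;> norm_num <;> ring
  unfold NS Stab
  simp_rw [hpt, Finset.sum_sub_distrib, ← Finset.sum_mul]
  rw [total_noiseWeight]
  ring

lemma sum_update_split (i : Fin n) (F : (Fin n → Bool) → ℝ) :
    2 * ∑ x : Fin n → Bool, F x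
      = (∑ x : Fin n → Bool, F (Function.update x i false))
        + ∑ x : Fin n → Bool, F (Function.update x i true) := by
  have hinv : Function.Involutive
      (fun x : Fin n → Bool => Function.update x i (!(x i))) := by
    intro x
    funext j
    by_cases hj : j = i
    · subst hj; simp
    · simp [Function.update_of_ne hj]
  have hbij : ∑ x : Fin n → Bool, F (Function.update x i (!(x i)))
      = ∑ x : Fin n → Bool, F x :=
    Fintype.sum_bijective _ hinv.bijective _ _ (fun x => rfl)
  have hflip : ∀ x : Fin n → Bool,
      F (Function.update x i false) + F (Function.update x i true)
        = F x + F (Function.update x i (!(x i))) := by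
    intro x
    cases h : x i with
    | false =>
        have h1 : Function.update x i false = x := by rw [← h]; exact Function.update_eq_self i x
        rw [h1]; simp
    | true =>
        have h1 : Function.update x i true = x := by rw [← h]; exact Function.update_eq_self i x
        rw [h1]; simp [add_comm]
  calc 2 * ∑ x : Fin n → Bool, F x
      = (∑ x : Fin n → Bool, F x) + ∑ x : Fin n → Bool, F (Function.update x i (!(x i))) := by
        rw [hbij]; ring
    _ = ∑ x : Fin n → Bool, (F x + F (Function.update x i (!(x i)))) := by
        rw [Finset.sum_add_distrib]
    _ = ∑ x : Fin n → Bool,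
          (F (Function.update x i false) + F (Function.update x i true)) := by
        exact (Finset.sum_congr rfl fun x _ => (hflip x).symm)
    _ = _ := Finset.sum_add_distrib

lemma nW_update (δ : ℝ) (i : Fin n) (b c : Bool) (x y : Fin n → Bool) :
    noiseWeight δ (Function.update x i b) (Function.update y i c)
      = mfac δ b c * ∏ j ∈ Finset.univ.erase i, mfac δ (x j) (y j) := by
  rw [noiseWeight_eq_prod, ← Finset.mul_prod_erase _ _ (Finset.mem_univ i)]
  congr 1
  · simp
  · refine Finset.prod_congr rfl fun j hj => ?_
    have hji : j ≠ i := (Finset.mem_erase.mp hj).1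
    rw [Function.update_of_ne hji, Function.update_of_ne hji]

lemma psd_lemma (ρ : ℝ) (hρ : 0 ≤ ρ) (E : Finset (Fin n)) (u : (Fin n → Bool) → ℝ) :
    0 ≤ ∑ x : Fin n → Bool, ∑ y : Fin n → Bool,
      (∏ j ∈ E, (1 / 4 + ρ / 4 * (chiB (x j) * chiB (y j)))) * (u x * u y) := by
  have hexp : ∀ x y : Fin n → Bool,
      (∏ j ∈ E, ((1 : ℝ) / 4 + ρ / 4 * (chiB (x j) * chiB (y j))))
        = ∑ t ∈ E.powerset, ((ρ / 4) ^ t.card * (1 / 4 : ℝ) ^ (E \ t).card)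
            * ((∏ j ∈ t, chiB (x j)) * (∏ j ∈ t, chiB (y j))) := by
    intro x y
    rw [Finset.prod_congr rfl
      (fun j _ => add_comm ((1 : ℝ) / 4) (ρ / 4 * (chiB (x j) * chiB (y j)))),
      Finset.prod_add]
    refine Finset.sum_congr rfl fun t _ => ?_
    rw [Finset.prod_const, Finset.prod_mul_distrib, Finset.prod_const,
      Finset.prod_mul_distrib]
    ring
  have step : ∑ x : Fin n → Bool, ∑ y : Fin n → Bool,
      (∏ j ∈ E, ((1 : ℝ) / 4 + ρ / 4 * (chiB (x j) * chiB (y j)))) * (u x * u y)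
      = ∑ t ∈ E.powerset, ((ρ / 4) ^ t.card * (1 / 4 : ℝ) ^ (E \ t).card)
          * (∑ x : Fin n → Bool, (∏ j ∈ t, chiB (x j)) * u x) ^ 2 := by
    simp_rw [hexp, Finset.sum_mul]
    rw [Finset.sum_congr rfl fun x _ => Finset.sum_comm, Finset.sum_comm]
    refine Finset.sum_congr rfl fun t _ => ?_
    rw [sq, Finset.sum_mul_sum, Finset.mul_sum]
    refine Finset.sum_congr rfl fun x _ => ?_
    rw [Finset.mul_sum]
    refine Finset.sum_congr rfl fun y _ => ?_
    ring
  rw [step]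
  refine Finset.sum_nonneg fun t _ => mul_nonneg (mul_nonneg ?_ ?_) (sq_nonneg _)
  · exact pow_nonneg (by linarith) _
  · exact pow_nonneg (by norm_num) _

/-- `R4 δ i g b c = ∑∑ W'(x,y) g(x^{i=b}) g(y^{i=c})`. -/
noncomputable def R4 (δ : ℝ) (i : Fin n) (g : (Fin n → Bool) → ℝ) (b c : Bool) : ℝ :=
  ∑ x : Fin n → Bool, ∑ y : Fin n → Bool,
    (∏ j ∈ Finset.univ.erase i, mfac δ (x j) (y j))
      * (g (Function.update x i b) * g (Function.update y i c))

lemma stab_decomp (δ : ℝ) (i : Fin n) (g : (Fin n → Bool) → ℝ) :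
    4 * Stab δ g
      = mfac δ false false * R4 δ i g false false + mfac δ false true * R4 δ i g false true
      + mfac δ true false * R4 δ i g true false + mfac δ true true * R4 δ i g true true := by
  have h2 : ∀ b : Bool,
      2 * (∑ x : Fin n → Bool, ∑ y : Fin n → Bool,
          noiseWeight δ (Function.update x i b) y
            * (g (Function.update x i b) * g y))
        = mfac δ b false * R4 δ i g b false + mfac δ b true * R4 δ i g b true := by
    intro b
    have hx : ∀ x : Fin n → Bool,
        2 * ∑ y : Fin n → Bool, noiseWeight δ (Function.update x i b) y
            * (g (Function.update x i b) * g y)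
          = mfac δ b false * (∑ y : Fin n → Bool,
              (∏ j ∈ Finset.univ.erase i, mfac δ (x j) (y j))
                * (g (Function.update x i b) * g (Function.update y i false)))
            + mfac δ b true * (∑ y : Fin n → Bool,
              (∏ j ∈ Finset.univ.erase i, mfac δ (x j) (y j))
                * (g (Function.update x i b) * g (Function.update y i true))) := by
      intro x
      rw [sum_update_split i (fun y => noiseWeight δ (Function.update x i b) y
        * (g (Function.update x i b) * g y))]
      rw [Finset.mul_sum, Finset.mul_sum]
      congr 1 <;>
        · refine Finset.sum_congr rfl fun y _ => ?_
          rw [nW_update]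
          ring
    calc 2 * (∑ x : Fin n → Bool, ∑ y : Fin n → Bool,
          noiseWeight δ (Function.update x i b) y
            * (g (Function.update x i b) * g y))
        = ∑ x : Fin n → Bool, 2 * ∑ y : Fin n → Bool,
            noiseWeight δ (Function.update x i b) y
              * (g (Function.update x i b) * g y) := Finset.mul_sum _ _ _
      _ = ∑ x : Fin n → Bool,
            (mfac δ b false * (∑ y : Fin n → Bool,
              (∏ j ∈ Finset.univ.erase i, mfac δ (x j) (y j))
                * (g (Function.update x i b) * g (Function.update y i false)))
            + mfac δ b true * (∑ y : Fin n → Bool,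
              (∏ j ∈ Finset.univ.erase i, mfac δ (x j) (y j))
                * (g (Function.update x i b) * g (Function.update y i true)))) :=
          Finset.sum_congr rfl fun x _ => hx x
      _ = _ := by
          rw [Finset.sum_add_distrib, ← Finset.mul_sum, ← Finset.mul_sum]
          rfl
  have h1 := sum_update_split i
    (fun x => ∑ y : Fin n → Bool, noiseWeight δ x y * (g x * g y))
  have hb0 := h2 false
  have hb1 := h2 true
  have hS : Stab δ g = ∑ x : Fin n → Bool,
      ∑ y : Fin n → Bool, noiseWeight δ x y * (g x * g y) := rfl
  rw [hS]
  linarith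

lemma R4_restr (δ : ℝ) (i : Fin n) (b b' c' : Bool) (f : (Fin n → Bool) → ℝ) :
    R4 δ i (restr f i b) b' c' = R4 δ i f b b := by
  unfold R4 restr
  simp [Function.update_idem]

lemma isPM_restr {f : (Fin n → Bool) → ℝ} (hf : isPM f) (i : Fin n) (b : Bool) :
    isPM (restr f i b) := fun x => hf _

lemma key_ineq (δ : ℝ) (hδ0 : 0 < δ) (hδ1 : δ < 1) (f : (Fin n → Bool) → ℝ)
    (hf : isPM f) (i : Fin n) :
    1 / 2 * NS δ (restr f i false) + 1 / 2 * NS δ (restr f i true) ≤ NS δ f := by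
  have hf0 := isPM_restr hf i false
  have hf1 := isPM_restr hf i true
  rw [NS_eq_stab δ f hf, NS_eq_stab δ _ hf0, NS_eq_stab δ _ hf1]
  -- mfac values
  have m00 : mfac δ false false = 1 / 2 - δ / 4 := by simp [mfac]; ring
  have m11 : mfac δ true true = 1 / 2 - δ / 4 := by simp [mfac]; ring
  have m01 : mfac δ false true = δ / 4 := by simp [mfac]; ring
  have m10 : mfac δ true false = δ / 4 := by simp [mfac]; ring
  have hd := stab_decomp δ i f
  have hd0 := stab_decomp δ i (restr f i false)
  have hd1 := stab_decomp δ i (restr f i true)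
  rw [R4_restr, R4_restr, R4_restr, R4_restr, m00, m01, m10, m11] at hd0
  rw [R4_restr, R4_restr, R4_restr, R4_restr, m00, m01, m10, m11] at hd1
  rw [m00, m01, m10, m11] at hd
  -- PSD step
  have hpsd : 0 ≤ R4 δ i f false false + R4 δ i f true true
      - R4 δ i f false true - R4 δ i f true false := by
    have hW : ∀ x y : Fin n → Bool,
        (∏ j ∈ Finset.univ.erase i, mfac δ (x j) (y j))
          = ∏ j ∈ Finset.univ.erase i,
              ((1 : ℝ) / 4 + (1 - δ) / 4 * (chiB (x j) * chiB (y j))) :=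
      fun x y => Finset.prod_congr rfl fun j _ => mfac_eq_chi δ _ _
    have hp := psd_lemma (1 - δ) (by linarith) (Finset.univ.erase i)
      (fun x => f (Function.update x i false) - f (Function.update x i true))
    have hrw : ∑ x : Fin n → Bool, ∑ y : Fin n → Bool,
        (∏ j ∈ Finset.univ.erase i,
          ((1 : ℝ) / 4 + (1 - δ) / 4 * (chiB (x j) * chiB (y j))))
          * ((f (Function.update x i false) - f (Function.update x i true))
            * (f (Function.update y i false) - f (Function.update y i true)))
        = R4 δ i f false false + R4 δ i f true true
          - R4 δ i f false true - R4 δ i f true false := by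
      unfold R4
      rw [← Finset.sum_add_distrib, ← Finset.sum_sub_distrib, ← Finset.sum_sub_distrib]
      refine Finset.sum_congr rfl fun x _ => ?_
      rw [← Finset.sum_add_distrib, ← Finset.sum_sub_distrib, ← Finset.sum_sub_distrib]
      refine Finset.sum_congr rfl fun y _ => ?_
      rw [hW x y]
      ring
    rw [hrw] at hp
    exact hp
  have hmul : δ / 4 * (R4 δ i f false true + R4 δ i f true false)
      ≤ δ / 4 * (R4 δ i f false false + R4 δ i f true true) := by
    apply mul_le_mul_of_nonneg_left (by linarith) (by linarith)
  linarith

lemma leafSum_NS_le (δ : ℝ) (hδ0 : 0 < δ) (hδ1 : δ < 1) :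
    ∀ (T : PTree n) (f : (Fin n → Bool) → ℝ), isPM f →
      leafSum (NS δ) T f ≤ NS δ f := by
  intro T
  induction T with
  | leaf => intro f hf; exact le_refl _
  | node i t0 t1 ih0 ih1 =>
      intro f hf
      have h0 := ih0 _ (isPM_restr hf i false)
      have h1 := ih1 _ (isPM_restr hf i true)
      have hk := key_ineq δ hδ0 hδ1 f hf i
      simp only [leafSum]
      linarith

lemma split_le (δ : ℝ) (hδ0 : 0 < δ) (hδ1 : δ < 1) :
    ∀ (T : PTree n) (p : List Bool) (i : Fin n) (f : (Fin n → Bool) → ℝ), isPM f →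
      T.isLeafPath p = true →
      leafSum (NS δ) (T.split p i) f ≤ leafSum (NS δ) T f := by
  intro T
  induction T with
  | leaf =>
      intro p i f hf hp
      cases p with
      | nil =>
          simp only [PTree.split, leafSum]
          exact key_ineq δ hδ0 hδ1 f hf i
      | cons b p' =>
          cases b <;> simp [PTree.isLeafPath] at hp
  | node j t0 t1 ih0 ih1 =>
      intro p i f hf hp
      cases p with
      | nil => simp [PTree.isLeafPath] at hp
      | cons b p' =>
          cases b with
          | false =>
              simp only [PTree.isLeafPath] at hp
              simp only [PTree.split, leafSum]
              have := ih0 p' i (restr f j false) (isPM_restr hf j false) hp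
              linarith
          | true =>
              simp only [PTree.isLeafPath] at hp
              simp only [PTree.split, leafSum]
              have := ih1 p' i (restr f j true) (isPM_restr hf j true) hp
              linarith

end Aux

/-- `NS_δ(f, T°) ≤ NS_δ(f)` for every partial tree `T°`; in particular,
splitting any leaf of a partial tree never increases `NS_δ(f, ·)`. -/
theorem statement16 {n : ℕ} (f : (Fin n → Bool) → ℝ) (hf : isPM f)
    (δ : ℝ) (hδ0 : 0 < δ) (hδ1 : δ < 1) (T : PTree n) :
    NSwrt δ f T ≤ NS δ f ∧
      ∀ (p : List Bool) (i : Fin n), T.isLeafPath p = true →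
        NSwrt δ f (T.split p i) ≤ NSwrt δ f T := by
  constructor
  · exact leafSum_NS_le δ hδ0 hδ1 T f hf
  · intro p i hp
    exact split_le δ hδ0 hδ1 T p i f hf hp
end
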